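/- arXiv:2507.12328 — 2 statements merged into one kernel-verified Lean document; each statement's English description precedes it below -/
import Mathlib

section
/- The explicit braiding operator T on V ⊗ V satisfies the Hecke relation T² = (q - q^{-1}) T + id. -/
/-- The matrix of the explicit braiding operator `T` on `V ⊗ V` in the basis
`{v_i ⊗ v_j : i, j ∈ S}`:
`T(v_i ⊗ v_j) = (-1)^{p(i)p(j)} q^{p(i,j)} v_j ⊗ v_i + δ_{i<j} (q - q⁻¹) v_i ⊗ v_j`,
where `p(i,j) = δ_{i,j}(1 - 2 p(i))`. -/
noncomputable def Tmat (k : Type) [Field k] (q : k) (S : Finset ℤ) (p : ℤ → ℕ) :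
    Matrix (S × S) (S × S) k := fun ab ij =>
  (if ab = (ij.2, ij.1) then
      (-1 : k) ^ (p (ij.1 : ℤ) * p (ij.2 : ℤ)) *
        q ^ (if (ij.1 : ℤ) = (ij.2 : ℤ) then 1 - 2 * (p (ij.1 : ℤ) : ℤ) else 0)
    else 0)
  + (if ab = ij ∧ (ij.1 : ℤ) < (ij.2 : ℤ) then q - q⁻¹ else 0)

/-- The explicit braiding operator `T` on `V ⊗ V` satisfies the Hecke relation
`T² = (q - q⁻¹) T + id`. -/
theorem braiding_hecke_relation (k : Type) [Field k] (q : k) (hq : q ≠ 0)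
    (S : Finset ℤ) (p : ℤ → ℕ) (hp : ∀ i, p i ≤ 1) :
    Tmat k q S p * Tmat k q S p = (q - q⁻¹) • Tmat k q S p + 1 := by
  ext a i
  rw [Matrix.mul_apply]
  obtain ⟨x, y⟩ := i
  by_cases hxy : (x : ℤ) = (y : ℤ)
  · have hxy' : x = y := Subtype.ext hxy
    subst hxy'
    rw [Finset.sum_eq_single (x, x)]
    · by_cases ha : a = (x, x)
      · subst ha
        simp only [Tmat, Matrix.add_apply, Matrix.smul_apply, Matrix.one_apply]
        have := hp (x : ℤ)
        interval_cases h : p (x : ℤ) <;>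
          simp [lt_irrefl, sub_eq_add_neg, zpow_neg] <;> field_simp <;> ring
      · have h1 : Tmat k q S p a (x, x) = 0 := by
          simp [Tmat, ha]
        simp [h1, Matrix.add_apply, Matrix.smul_apply, Matrix.one_apply, ha]
    · intro c _ hc
      have h2 : Tmat k q S p c (x, x) = 0 := by
        simp [Tmat, hc]
      simp [h2]
    · intro h; exact absurd (Finset.mem_univ _) h
  · have hne : ((x, y) : ↥S × ↥S) ≠ (y, x) := by
      intro h
      exact hxy (congrArg Subtype.val (congrArg Prod.fst h))
    have key : ∑ c : ↥S × ↥S, Tmat k q S p a c * Tmat k q S p c (x, y)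
        = Tmat k q S p a (x, y) * Tmat k q S p (x, y) (x, y)
          + Tmat k q S p a (y, x) * Tmat k q S p (y, x) (x, y) := by
      rw [show (∑ c : ↥S × ↥S, Tmat k q S p a c * Tmat k q S p c (x, y))
            = ∑ c ∈ ({(x, y), (y, x)} : Finset (↥S × ↥S)),
                Tmat k q S p a c * Tmat k q S p c (x, y) by
          refine (Finset.sum_subset (Finset.subset_univ _) ?_).symm
          intro c _ hc
          simp only [Finset.mem_insert, Finset.mem_singleton, not_or] at hc
          have h3 : Tmat k q S p c (x, y) = 0 := by
            simp [Tmat, hc.1, hc.2]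
          simp [h3],
        Finset.sum_pair hne]
    rw [key]
    have hT1 : Tmat k q S p (x, y) (x, y) = if (x : ℤ) < (y : ℤ) then q - q⁻¹ else 0 := by
      simp [Tmat, hne, hxy]
    have hT2 : Tmat k q S p (y, x) (x, y) = (-1 : k) ^ (p (x : ℤ) * p (y : ℤ)) := by
      simp [Tmat, hne.symm, hxy]
    have hε : ((-1 : k) ^ (p (x : ℤ) * p (y : ℤ))) * ((-1 : k) ^ (p (x : ℤ) * p (y : ℤ))) = 1 := by
      rw [← pow_add, ← two_mul, pow_mul, neg_one_sq, one_pow]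
    rw [hT1, hT2]
    by_cases ha1 : a = (x, y)
    · subst ha1
      have hTa1 : Tmat k q S p (x, y) (x, y) = if (x : ℤ) < (y : ℤ) then q - q⁻¹ else 0 := by
        simp [Tmat, hne, hxy]
      have hTa2 : Tmat k q S p (x, y) (y, x) = (-1 : k) ^ (p (x : ℤ) * p (y : ℤ)) := by
        simp [Tmat, hne, hxy, Ne.symm hxy, mul_comm]
      rw [hTa1, hTa2]
      simp only [Matrix.add_apply, Matrix.smul_apply, Matrix.one_apply, if_pos rfl, hTa1]
      by_cases hlt : (x : ℤ) < (y : ℤ) <;> simp [hlt, hε, Matrix.one_apply] <;> try ring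
    · by_cases ha2 : a = (y, x)
      · subst ha2
        have hTa1 : Tmat k q S p (y, x) (x, y) = (-1 : k) ^ (p (x : ℤ) * p (y : ℤ)) := by
          simp [Tmat, hne.symm, hxy]
        have hTa2 : Tmat k q S p (y, x) (y, x) = if (y : ℤ) < (x : ℤ) then q - q⁻¹ else 0 := by
          simp [Tmat, hne.symm, Ne.symm hxy]
        rw [hTa1, hTa2]
        have hone : ((y, x) : ↥S × ↥S) ≠ (x, y) := hne.symm
        simp only [Matrix.add_apply, Matrix.smul_apply, Matrix.one_apply, if_neg hone, hTa1]
        rcases lt_or_gt_of_ne hxy with hlt | hlt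
        ·  (simp [hlt, not_lt.mpr hlt.le]; try ring)
        ·  (simp [hlt, not_lt.mpr hlt.le]; try ring)
      · have hTa1 : Tmat k q S p a (x, y) = 0 := by
          simp [Tmat, ha1, ha2]
        have hTa2 : Tmat k q S p a (y, x) = 0 := by
          simp [Tmat, ha1, ha2]
        simp [hTa1, hTa2, Matrix.add_apply, Matrix.smul_apply, Matrix.one_apply, ha1]
end

section
/- Positive curl identity at the level of vectors: the composite (ev⁻ ⊗ id_{V⁺}) ∘ (id_{V⁻} ⊗ T) ∘ (coev₊ ⊗ id_{V⁺}) : V⁺ → V⁺ equals q^{m-n} times the identity, where T is the explicit braiding on V⁺ ⊗ V⁺. -/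
set_option synthInstance.maxHeartbeats 1000000
set_option maxHeartbeats 1000000

open scoped TensorProduct

/-- The bilinear map `(f, g) ↦ ∑ i, ∑ j, (f i * g j) • w i j` determined by its
values `w i j` on pairs of basis vectors. -/
noncomputable def bilGen {k : Type} [CommRing k] {ι : Type} [Fintype ι]
    {M : Type} [AddCommMonoid M] [Module k M] (w : ι → ι → M) :
    (ι → k) →ₗ[k] (ι → k) →ₗ[k] M :=
  LinearMap.mk₂ k (fun f g => ∑ i : ι, ∑ j : ι, (f i * g j) • w i j)
    (fun f₁ f₂ g => by
      simp only [Pi.add_apply, add_mul, add_smul, Finset.sum_add_distrib])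
    (fun c f g => by
      simp only [Pi.smul_apply, smul_eq_mul, Finset.smul_sum, smul_smul]
      exact Finset.sum_congr rfl fun i _ => Finset.sum_congr rfl fun j _ => by
        rw [mul_assoc])
    (fun f g₁ g₂ => by
      simp only [Pi.add_apply, mul_add, add_smul, Finset.sum_add_distrib])
    (fun c f g => by
      simp only [Pi.smul_apply, smul_eq_mul, Finset.smul_sum, smul_smul]
      exact Finset.sum_congr rfl fun i _ => Finset.sum_congr rfl fun j _ => by
        rw [mul_left_comm])

namespace PositiveCurl

/-- The ground field `ℚ(q)`. -/
abbrev K : Type := RatFunc ℚ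

/-- The index set `{m, m-1, ..., 1-n}`. -/
abbrev Idx (m n : ℕ) : Type := ↥(Finset.Icc (1 - (n : ℤ)) (m : ℤ))

/-- The vector space with basis indexed by `Idx m n` (model for `V⁺` and `V⁻`). -/
abbrev V (m n : ℕ) : Type := Idx m n → K

/-- The basis vector `v_i`. -/
noncomputable def bv (m n : ℕ) (i : Idx m n) : V m n := Pi.single i 1

/-- Natural-number-valued parity: `pN i = 1` iff `i ≤ 0`. -/
def pN (i : ℤ) : ℕ := if i ≤ 0 then 1 else 0

/-- Integer-valued parity: `pZ i = 1` iff `i ≤ 0`. -/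
def pZ (i : ℤ) : ℤ := if i ≤ 0 then 1 else 0

/-- `p(i,j) = δ_{i,j} (1 - 2 p(i))`. -/
def pij (i j : ℤ) : ℤ := if i = j then 1 - 2 * pZ i else 0

/-- The explicit braiding `T` on `V⁺ ⊗ V⁺`:
`T(v_i⁺ ⊗ v_j⁺) = (-1)^{p(i)p(j)} q^{p(i,j)} v_j⁺ ⊗ v_i⁺
  + δ_{i<j} (q - q⁻¹) v_i⁺ ⊗ v_j⁺`. -/
noncomputable def Tbraid (m n : ℕ) : V m n ⊗[K] V m n →ₗ[K] V m n ⊗[K] V m n :=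
  TensorProduct.lift (bilGen fun i j =>
    ((-1 : K) ^ (pN (i : ℤ) * pN (j : ℤ)) *
        (RatFunc.X : K) ^ pij (i : ℤ) (j : ℤ)) • (bv m n j ⊗ₜ[K] bv m n i)
      + (if (i : ℤ) < (j : ℤ) then (RatFunc.X : K) - (RatFunc.X : K)⁻¹ else 0) •
        (bv m n i ⊗ₜ[K] bv m n j))

/-- The evaluation `ev⁻ : V⁻ ⊗ V⁺ → k`,
`ev⁻(v_i⁻ ⊗ v_j⁺) = δ_{i,j} (-1)^{i+p(i)} q^{m+n-|i-1|}`. -/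
noncomputable def evMinus (m n : ℕ) : V m n ⊗[K] V m n →ₗ[K] K :=
  TensorProduct.lift (bilGen fun i j =>
    if (i : ℤ) = (j : ℤ) then
      (-1 : K) ^ ((i : ℤ) + pZ (i : ℤ)) *
        (RatFunc.X : K) ^ ((m : ℤ) + (n : ℤ) - |(i : ℤ) - 1|)
    else 0)

/-- The coevaluation `coev₊ : k → V⁻ ⊗ V⁺`,
`coev₊(1) = ∑ i, (-q)^{-|i|} v_i⁻ ⊗ v_i⁺`. -/
noncomputable def coevPlus (m n : ℕ) : K →ₗ[K] V m n ⊗[K] V m n :=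
  LinearMap.toSpanSingleton K _
    (∑ i : Idx m n, (-(RatFunc.X : K)) ^ (-|(i : ℤ)|) • (bv m n i ⊗ₜ[K] bv m n i))

lemma bilGen_single {k : Type} [CommRing k] {ι : Type} [Fintype ι] [DecidableEq ι]
    {M : Type} [AddCommMonoid M] [Module k M] (w : ι → ι → M) (i j : ι) :
    bilGen (k := k) w (Pi.single i 1) (Pi.single j 1) = w i j := by
  simp [bilGen, Pi.single_apply, ite_and, mul_ite, mul_one, mul_zero, ite_smul,
    one_smul, zero_smul, Finset.sum_ite_eq', Finset.sum_ite_eq]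

lemma Tbraid_bv (m n : ℕ) (i j : Idx m n) :
    Tbraid m n (bv m n i ⊗ₜ[K] bv m n j) =
      ((-1 : K) ^ (pN (i : ℤ) * pN (j : ℤ)) *
          (RatFunc.X : K) ^ pij (i : ℤ) (j : ℤ)) • (bv m n j ⊗ₜ[K] bv m n i)
        + (if (i : ℤ) < (j : ℤ) then (RatFunc.X : K) - (RatFunc.X : K)⁻¹ else 0) •
          (bv m n i ⊗ₜ[K] bv m n j) := by
  rw [Tbraid, TensorProduct.lift.tmul]; exact bilGen_single _ i j

lemma evMinus_bv (m n : ℕ) (i j : Idx m n) :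
    evMinus m n (bv m n i ⊗ₜ[K] bv m n j) =
      if (i : ℤ) = (j : ℤ) then
        (-1 : K) ^ ((i : ℤ) + pZ (i : ℤ)) *
          (RatFunc.X : K) ^ ((m : ℤ) + (n : ℤ) - |(i : ℤ) - 1|)
      else 0 := by
  rw [evMinus, TensorProduct.lift.tmul]; exact bilGen_single _ i j

/-- Closed form for the partial curl coefficients. -/
noncomputable def bb (M j : ℤ) : K :=
  if j ≤ 0 then (RatFunc.X : K) ^ (M + 2*j - 2) else (RatFunc.X : K) ^ (M - 2*j + 2)

lemma hq : (RatFunc.X : K) ≠ 0 := RatFunc.X_ne_zero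
lemma Xadd (a b : ℤ) : (RatFunc.X:K)^a * (RatFunc.X:K)^b = (RatFunc.X:K)^(a+b) :=
  (zpow_add₀ hq a b).symm
lemma m1add (a b : ℤ) : (-1:K)^a * (-1:K)^b = (-1:K)^(a+b) :=
  (zpow_add₀ (by norm_num) a b).symm
lemma negX (e : ℤ) : (-(RatFunc.X:K))^e = (-1:K)^e * (RatFunc.X:K)^e := by
  rw [← neg_one_mul, mul_zpow]
lemma Xcongr (a b : ℤ) (h : a = b) : (RatFunc.X:K)^a = (RatFunc.X:K)^b := by rw [h]

lemma diag_eq (M j : ℤ) :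
    (-1:K) ^ (pN j * pN j) * (RatFunc.X:K) ^ pij j j * (-(RatFunc.X:K)) ^ (-|j|) *
      ((-1:K) ^ (j + pZ j) * (RatFunc.X:K) ^ (M - |j-1|)) = bb M j := by
  by_cases h : j ≤ 0
  · simp only [pN, pZ, pij, bb, if_pos h, if_pos rfl, abs_of_nonpos h,
      abs_of_nonpos (show j - 1 ≤ 0 by omega), neg_neg, negX]
    calc (-1:K) ^ (1 * 1) * RatFunc.X ^ (1 - 2 * 1 : ℤ) * ((-1:K) ^ j * RatFunc.X ^ j) *
          ((-1:K) ^ (j + 1) * RatFunc.X ^ (M - -(j - 1)))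
        = -(((-1:K)^j * (-1:K)^(j+1)) *
            ((RatFunc.X:K)^(1-2*1:ℤ) * RatFunc.X^j * RatFunc.X^(M - -(j-1)))) := by ring
      _ = -((-1:K)^(j+(j+1)) * ((RatFunc.X:K)^((1-2*1)+j+(M - -(j-1))))) := by
            rw [m1add, Xadd, Xadd]
      _ = (RatFunc.X:K)^(M+2*j-2) := by
            rw [Odd.neg_one_zpow ⟨j, by ring⟩, Xcongr _ (M+2*j-2) (by ring)]; ring
  · simp only [pN, pZ, pij, bb, if_neg h, if_pos rfl, abs_of_pos (show (0:ℤ) < j by omega),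
      abs_of_nonneg (show (0:ℤ) ≤ j - 1 by omega), negX]
    calc (-1:K) ^ (0 * 0) * RatFunc.X ^ (1 - 2 * 0 : ℤ) * ((-1:K) ^ (-j) * RatFunc.X ^ (-j)) *
          ((-1:K) ^ (j + 0) * RatFunc.X ^ (M - (j - 1)))
        = ((-1:K)^(-j) * (-1:K)^(j+0)) *
            ((RatFunc.X:K)^(1-2*0:ℤ) * RatFunc.X^(-j) * RatFunc.X^(M - (j-1))) := by ring
      _ = (-1:K)^(-j+(j+0)) * ((RatFunc.X:K)^((1-2*0)+ -j+(M - (j-1)))) := by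
            rw [m1add, Xadd, Xadd]
      _ = (RatFunc.X:K)^(M-2*j+2) := by
            rw [Even.neg_one_zpow ⟨0, by ring⟩, Xcongr _ (M-2*j+2) (by ring)]; ring

lemma subpow (e : ℤ) : ((RatFunc.X:K) - (RatFunc.X:K)⁻¹) * (RatFunc.X:K)^e
    = (RatFunc.X:K)^(e+1) - (RatFunc.X:K)^(e-1) := by
  rw [sub_mul, zpow_add_one₀ hq, zpow_sub_one₀ hq]; ring

lemma step_eq (M i : ℤ) :
    ((RatFunc.X:K) - (RatFunc.X:K)⁻¹) * (-(RatFunc.X:K)) ^ (-|i|) *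
      ((-1:K) ^ (i + pZ i) * (RatFunc.X:K) ^ (M - |i-1|)) = bb M i - bb M (i+1) := by
  by_cases h : i ≤ 0
  · have hb : bb M (i+1) = (RatFunc.X:K)^(M+2*i) := by
      unfold bb; split <;> exact Xcongr _ _ (by omega)
    rw [hb, show bb M i = (RatFunc.X:K)^(M+2*i-2) from if_pos h]
    simp only [pZ, if_pos h, abs_of_nonpos h, abs_of_nonpos (show i - 1 ≤ 0 by omega),
      neg_neg, negX, ← zpow_neg_one (RatFunc.X:K)]
    calc ((RatFunc.X:K) - RatFunc.X ^ (-1:ℤ)) * ((-1:K) ^ i * RatFunc.X ^ i) *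
          ((-1:K) ^ (i + 1) * RatFunc.X ^ (M - -(i - 1)))
        = ((-1:K)^i * (-1:K)^(i+1)) *
            (((RatFunc.X:K) - RatFunc.X^(-1:ℤ)) * (RatFunc.X^i * RatFunc.X^(M - -(i-1)))) := by
          ring
      _ = -(((RatFunc.X:K) - RatFunc.X^(-1:ℤ)) * RatFunc.X^(i+(M - -(i-1)))) := by
          rw [m1add, Xadd, Odd.neg_one_zpow ⟨i, by ring⟩]; ring
      _ = RatFunc.X^(M+2*i-2) - RatFunc.X^(M+2*i) := by
          rw [zpow_neg_one, subpow, Xcongr (i + (M - -(i - 1)) + 1) (M+2*i) (by ring),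
            Xcongr (i + (M - -(i - 1)) - 1) (M+2*i-2) (by ring)]
          ring
  · have hb : bb M (i+1) = (RatFunc.X:K)^(M-2*i) := by
      unfold bb; split
      · omega
      · exact Xcongr _ _ (by omega)
    rw [hb, show bb M i = (RatFunc.X:K)^(M-2*i+2) from if_neg h]
    simp only [pZ, if_neg h, abs_of_pos (show (0:ℤ) < i by omega),
      abs_of_nonneg (show (0:ℤ) ≤ i - 1 by omega), negX]
    calc ((RatFunc.X:K) - (RatFunc.X:K)⁻¹) * ((-1:K) ^ (-i) * RatFunc.X ^ (-i)) *
          ((-1:K) ^ (i + 0) * RatFunc.X ^ (M - (i - 1)))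
        = ((-1:K)^(-i) * (-1:K)^(i+0)) *
            (((RatFunc.X:K) - (RatFunc.X:K)⁻¹) * (RatFunc.X^(-i) * RatFunc.X^(M - (i-1)))) := by
          ring
      _ = ((RatFunc.X:K) - (RatFunc.X:K)⁻¹) * RatFunc.X^(-i+(M - (i-1))) := by
          rw [m1add, Xadd, Even.neg_one_zpow ⟨0, by ring⟩]; ring
      _ = RatFunc.X^(M-2*i+2) - RatFunc.X^(M-2*i) := by
          rw [subpow, Xcongr (-i + (M - (i - 1)) + 1) (M-2*i+2) (by ring),
            Xcongr (-i + (M - (i - 1)) - 1) (M-2*i) (by ring)]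

lemma tel (N : ℤ) (f g : ℤ → K) (h : ∀ i, f i = g i - g (i+1)) :
    ∀ j, N ≤ j → ∑ i ∈ Finset.Ico N j, f i = g N - g j := by
  refine Int.le_induction ?_ ?_
  · simp
  · intro j hj ih
    rw [show Finset.Ico N (j+1) = insert j (Finset.Ico N j) from by
          ext x; simp only [Finset.mem_insert, Finset.mem_Ico]; omega,
      Finset.sum_insert (by simp), ih, h]
    ring

lemma bb_init (m n : ℕ) : bb ((m:ℤ)+(n:ℤ)) (1-(n:ℤ)) = (RatFunc.X:K)^((m:ℤ)-(n:ℤ)) := by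
  unfold bb; split <;> exact Xcongr _ _ (by omega)
/-- Positive curl identity: the composite
`(ev⁻ ⊗ id_{V⁺}) ∘ (id_{V⁻} ⊗ T) ∘ (coev₊ ⊗ id_{V⁺}) : V⁺ → V⁺`
equals `q^{m-n}` times the identity. -/
theorem positive_curl (m n : ℕ) :
    (TensorProduct.lid K (V m n)).toLinearMap ∘ₗ
        TensorProduct.map (evMinus m n) LinearMap.id ∘ₗ
        (TensorProduct.assoc K (V m n) (V m n) (V m n)).symm.toLinearMap ∘ₗ
        TensorProduct.map LinearMap.id (Tbraid m n) ∘ₗ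
        (TensorProduct.assoc K (V m n) (V m n) (V m n)).toLinearMap ∘ₗ
        TensorProduct.map (coevPlus m n) LinearMap.id ∘ₗ
        (TensorProduct.lid K (V m n)).symm.toLinearMap
      = (RatFunc.X : K) ^ ((m : ℤ) - (n : ℤ)) • (LinearMap.id : V m n →ₗ[K] V m n) := by
  apply Module.Basis.ext (Pi.basisFun K (Idx m n))
  intro j
  have hbv : ∀ i : Idx m n, (Pi.single i 1 : V m n) = bv m n i := fun _ => rfl
  simp only [Pi.basisFun_apply, LinearMap.comp_apply, LinearEquiv.coe_coe,
    TensorProduct.lid_symm_apply, TensorProduct.map_tmul, LinearMap.id_coe, id_eq,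
    coevPlus, LinearMap.toSpanSingleton_apply, one_smul, hbv,
    TensorProduct.sum_tmul, TensorProduct.smul_tmul', map_sum, LinearMapClass.map_smul,
    TensorProduct.assoc_tmul, TensorProduct.assoc_symm_tmul, Tbraid_bv,
    TensorProduct.tmul_add, TensorProduct.tmul_smul, map_add,
    TensorProduct.lid_tmul, LinearMap.smul_apply, LinearMap.id_apply]
  simp only [TensorProduct.ite_tmul, ← TensorProduct.smul_tmul', LinearMapClass.map_smul,
    apply_ite (evMinus m n), map_zero, evMinus_bv, smul_eq_mul,
    smul_smul, mul_ite, ite_mul, mul_zero, zero_mul, if_pos rfl,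
    ite_smul, zero_smul, Finset.sum_add_distrib, Subtype.coe_inj,
    Finset.sum_ite_eq', Finset.mem_univ, if_true, ← Finset.sum_smul]
  rw [diag_eq ((m:ℤ)+(n:ℤ)) (j:ℤ)]
  simp only [step_eq ((m:ℤ)+(n:ℤ))]
  obtain ⟨hj1, hj2⟩ := Finset.mem_Icc.mp j.2
  have hsum : (∑ x : Idx m n, if (x:ℤ) < (j:ℤ) then
        (bb ((m:ℤ)+(n:ℤ)) (x:ℤ) - bb ((m:ℤ)+(n:ℤ)) ((x:ℤ)+1)) • bv m n j else 0)
      = (bb ((m:ℤ)+(n:ℤ)) (1-(n:ℤ)) - bb ((m:ℤ)+(n:ℤ)) (j:ℤ)) • bv m n j := by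
    rw [show (∑ x : Idx m n, if (x:ℤ) < (j:ℤ) then
          (bb ((m:ℤ)+(n:ℤ)) (x:ℤ) - bb ((m:ℤ)+(n:ℤ)) ((x:ℤ)+1)) • bv m n j else 0)
        = (∑ x : Idx m n, if (x:ℤ) < (j:ℤ) then
          (bb ((m:ℤ)+(n:ℤ)) (x:ℤ) - bb ((m:ℤ)+(n:ℤ)) ((x:ℤ)+1)) else 0) • bv m n j from by
      rw [Finset.sum_smul]; exact Finset.sum_congr rfl fun x _ => by split <;> simp]
    congr 1
    rw [Finset.sum_coe_sort (Finset.Icc (1-(n:ℤ)) (m:ℤ))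
        (fun i => if i < (j:ℤ) then bb ((m:ℤ)+(n:ℤ)) i - bb ((m:ℤ)+(n:ℤ)) (i+1) else 0),
      ← Finset.sum_filter,
      show (Finset.Icc (1-(n:ℤ)) (m:ℤ)).filter (· < (j:ℤ)) = Finset.Ico (1-(n:ℤ)) (j:ℤ) from by
        ext x; simp only [Finset.mem_filter, Finset.mem_Icc, Finset.mem_Ico]; omega]
    exact tel _ _ (bb ((m:ℤ)+(n:ℤ))) (fun i => rfl) (j:ℤ) hj1
  rw [hsum, ← add_smul, show bb ((m:ℤ)+(n:ℤ)) (j:ℤ) +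
      (bb ((m:ℤ)+(n:ℤ)) (1-(n:ℤ)) - bb ((m:ℤ)+(n:ℤ)) (j:ℤ))
    = bb ((m:ℤ)+(n:ℤ)) (1-(n:ℤ)) from by ring, bb_init]

end PositiveCurl
end
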